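/- arXiv:2005.08201 — 2 statements merged into one kernel-verified Lean document; each statement's English description precedes it below -/
import Mathlib

section
/- Let F_q be a finite field of characteristic 2 with q = 2^n elements. Then the group V = 1 + J(F_q[QD_16]) has exponent 8; that is, y^8 = 1 for every y in V, and 8 is the least such positive integer. -/
/-- Relations for the quasidihedral group `QD_{2^k}`:
`a^(2^(k-1)) = 1`, `x^2 = 1`, `x * a * x = a^(2^(k-2)-1)`. -/
def qdRels (k : ℕ) : Set (FreeGroup (Fin 2)) :=
  {FreeGroup.of 0 ^ (2 ^ (k - 1)), FreeGroup.of 1 ^ 2,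
    FreeGroup.of 1 * FreeGroup.of 0 * FreeGroup.of 1 * (FreeGroup.of 0 ^ (2 ^ (k - 2) - 1))⁻¹}

/-- The quasidihedral group of order 16: `⟨a, x | a^8 = x^2 = 1, x a x = a^3⟩`. -/
def QD16 : Type := PresentedGroup (qdRels 4)

instance : Group QD16 := inferInstanceAs (Group (PresentedGroup (qdRels 4)))

/-!
Write `B` and `Y` for the images of `a` and `x` in `F[QD16]`. Every element is
`p(B) + q(B) Y` for polynomials `p, q`, and `Y p(B) = p(B³) Y`, so squaring acts on the pair by
`(p, q) ↦ (p² + q · q(X³), q · (p + p(X³)))`. In characteristic 2, `X³ - X = X (X - 1)²`,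
hence `(X - 1)² ∣ p + p(X³)`. If the augmentation `p(1) + q(1)` vanishes, two squarings
therefore make both components divisible by `(X - 1)⁴`: `w⁴ = (B⁴ - 1) z` with `B⁴ - 1` central
and `(B⁴ - 1)² = B⁸ - 1 = 0`, so `w⁸ = 0`. Thus the augmentation ideal is nil, hence equal to
the Jacobson radical, and every `u ∈ 1 + J` satisfies `u⁸ = 1 + (u - 1)⁸ = 1`; the unit `a`,
of order 8, shows the exponent is exactly 8.
-/

open Polynomial

section CharTwo

variable {R : Type*} [CommRing R] [CharP R 2]

theorem X_sub_one_sq_dvd_add_comp_X_pow_three (p : R[X]) :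
    (X - 1) ^ 2 ∣ p + p.comp (X ^ 3) := by
  have h2 : (2 : R[X]) = 0 := CharTwo.two_eq_zero
  have hX : (X - 1 : R[X]) ^ 2 ∣ X ^ 3 - X :=
    ⟨X, by linear_combination (X ^ 2 - X) * h2⟩
  have hcomp : (X ^ 3 - X : R[X]) ∣ p.comp (X ^ 3) - p := by
    simpa only [eval_map, ← comp.eq_def, comp_X] using sub_dvd_eval_sub (X ^ 3) X (p.map C)
  rw [add_comm, ← CharTwo.sub_eq_add]
  exact hX.trans hcomp

theorem X_sub_one_sq_dvd_sq_add_mul_comp {p q : R[X]} (h : (p + q).eval 1 = 0) :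
    (X - 1) ^ 2 ∣ p ^ 2 + q * q.comp (X ^ 3) := by
  have h2 : (2 : R[X]) = 0 := CharTwo.two_eq_zero
  obtain ⟨d, hd⟩ : X - C 1 ∣ p + q := dvd_iff_isRoot.mpr h
  rw [map_one] at hd
  have : p ^ 2 + q * q.comp (X ^ 3) = q * (q + q.comp (X ^ 3)) + (p + q) ^ 2 := by
    linear_combination (-(q ^ 2 + p * q)) * h2
  rw [this, hd, mul_pow]
  exact dvd_add (dvd_mul_of_dvd_right (X_sub_one_sq_dvd_add_comp_X_pow_three q) q)
    (dvd_mul_right _ _)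

end CharTwo

theorem X_sub_one_pow_dvd_comp_X_pow_three {R : Type*} [CommRing R] {k : ℕ} {p : R[X]}
    (h : (X - 1) ^ k ∣ p) : (X - 1) ^ k ∣ p.comp (X ^ 3) := by
  obtain ⟨r, rfl⟩ := h
  have h3 : (X - 1 : R[X]) ∣ X ^ 3 - 1 := by simpa using sub_dvd_pow_sub_pow (X : R[X]) 1 3
  rw [mul_comp, pow_comp, sub_comp, X_comp, one_comp]
  exact (pow_dvd_pow_of_dvd h3 k).mul_right _

theorem SemiconjBy.aeval {R S : Type*} [CommSemiring R] [Semiring S] [Algebra R S] {y b c : S}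
    (h : SemiconjBy y b c) (p : R[X]) : SemiconjBy y (aeval b p) (aeval c p) := by
  induction p using Polynomial.induction_on' with
  | add p q hp hq => simpa only [map_add] using hp.add_right hq
  | monomial n r =>
      simp only [aeval_monomial]
      exact SemiconjBy.mul_right (Algebra.commutes r y).symm (h.pow_right n)

section QuasidihedralRelations

variable {R S : Type*} [CommRing R] [Ring S] [Algebra R S] {B Y : S}

theorem mul_aeval_eq_aeval_comp_mul (hYB : Y * B = B ^ 3 * Y) (p : R[X]) :
    Y * aeval B p = aeval B (p.comp (X ^ 3)) * Y := by
  rw [aeval_comp, map_pow, aeval_X]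
  exact SemiconjBy.aeval hYB p

theorem mul_aeval_add_aeval_mul (hY : Y * Y = 1) (hYB : Y * B = B ^ 3 * Y) (p q : R[X]) :
    Y * (aeval B p + aeval B q * Y) = aeval B (q.comp (X ^ 3)) + aeval B (p.comp (X ^ 3)) * Y := by
  rw [mul_add, ← mul_assoc, mul_aeval_eq_aeval_comp_mul hYB, mul_aeval_eq_aeval_comp_mul hYB,
    mul_assoc, hY, mul_one, add_comm]

theorem aeval_add_aeval_mul_sq (hY : Y * Y = 1) (hYB : Y * B = B ^ 3 * Y) (p q : R[X]) :
    (aeval B p + aeval B q * Y) ^ 2 =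
      aeval B (p ^ 2 + q * q.comp (X ^ 3)) + aeval B (q * (p + p.comp (X ^ 3))) * Y := by
  have huv : aeval B p * aeval B q = aeval B q * aeval B p := ((Commute.all p q).map (aeval B)).eq
  calc (aeval B p + aeval B q * Y) ^ 2
      = aeval B p * aeval B p + aeval B q * (Y * aeval B q) * Y + aeval B p * aeval B q * Y
          + aeval B q * (Y * aeval B p) := by noncomm_ring
    _ = aeval B p * aeval B p + aeval B q * aeval B (q.comp (X ^ 3)) * (Y * Y)
          + (aeval B q * aeval B p + aeval B q * aeval B (p.comp (X ^ 3))) * Y := by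
        rw [mul_aeval_eq_aeval_comp_mul hYB, mul_aeval_eq_aeval_comp_mul hYB, huv]; noncomm_ring
    _ = _ := by simp only [hY, mul_one, map_add, map_mul, sq, mul_add]

theorem aeval_add_aeval_mul_sq_eq_zero [CharP R 2] (hB : B ^ 8 = 1) (hYB : Y * B = B ^ 3 * Y)
    {p q : R[X]} (hp : (X - 1) ^ 4 ∣ p) (hq : (X - 1) ^ 4 ∣ q) :
    (aeval B p + aeval B q * Y) ^ 2 = 0 := by
  have h4 : (X - 1 : R[X]) ^ 4 = X ^ 4 - 1 := by
    simpa using sub_pow_char_pow (p := 2) (X : R[X]) 1 (n := 2)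
  have h8 : ((X - 1 : R[X]) ^ 4) ^ 2 = X ^ 8 - 1 := by
    simpa [← pow_mul] using sub_pow_char_pow (p := 2) (X : R[X]) 1 (n := 3)
  have hcc : aeval B ((X - 1 : R[X]) ^ 4) ^ 2 = 0 := by
    rw [← map_pow, h8, map_sub, map_pow, aeval_X, hB, map_one, sub_self]
  have hcY : Commute (aeval B ((X - 1 : R[X]) ^ 4)) Y := by
    have h12 : aeval (B ^ 3) ((X - 1 : R[X]) ^ 4) = aeval B ((X - 1 : R[X]) ^ 4) := by
      rw [h4, map_sub, map_sub, map_pow, map_pow, aeval_X, aeval_X, map_one, map_one, ← pow_mul,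
        show 3 * 4 = 8 + 4 by rfl, pow_add, hB, one_mul]
    exact (h12 ▸ SemiconjBy.aeval hYB ((X - 1 : R[X]) ^ 4)).symm
  have hc : ∀ r : R[X], Commute (aeval B ((X - 1 : R[X]) ^ 4)) (aeval B r) :=
    fun r => (Commute.all _ r).map (aeval B)
  obtain ⟨a, rfl⟩ := hp
  obtain ⟨b, rfl⟩ := hq
  rw [map_mul, map_mul, mul_assoc, ← mul_add, ((hc a).add_right ((hc b).mul_right hcY)).mul_pow,
    hcc, zero_mul]

theorem aeval_add_aeval_mul_pow_eight_eq_zero [CharP R 2] (hB : B ^ 8 = 1) (hY : Y * Y = 1)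
    (hYB : Y * B = B ^ 3 * Y) {p q : R[X]} (h : (p + q).eval 1 = 0) :
    (aeval B p + aeval B q * Y) ^ 8 = 0 := by
  rw [show 8 = 2 * 2 * 2 by rfl, pow_mul, pow_mul, aeval_add_aeval_mul_sq hY hYB,
    aeval_add_aeval_mul_sq hY hYB]
  set p₁ := p ^ 2 + q * q.comp (X ^ 3)
  set q₁ := q * (p + p.comp (X ^ 3))
  have hp₁ : (X - 1) ^ 2 ∣ p₁ := X_sub_one_sq_dvd_sq_add_mul_comp h
  have hq₁ : (X - 1) ^ 2 ∣ q₁ :=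
    dvd_mul_of_dvd_right (X_sub_one_sq_dvd_add_comp_X_pow_three p) q
  have h4 : (X - 1 : R[X]) ^ 4 = (X - 1) ^ 2 * (X - 1) ^ 2 := by rw [← pow_add]
  apply aeval_add_aeval_mul_sq_eq_zero hB hYB
  · rw [h4, ← sq]
    exact dvd_add (pow_dvd_pow_of_dvd hp₁ 2)
      (by rw [sq]; exact mul_dvd_mul hq₁ (X_sub_one_pow_dvd_comp_X_pow_three hq₁))
  · rw [h4]
    exact mul_dvd_mul hq₁ (X_sub_one_sq_dvd_add_comp_X_pow_three p₁)

end QuasidihedralRelations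

namespace QD16

def a : QD16 := PresentedGroup.of 0

def x : QD16 := PresentedGroup.of 1

theorem a_pow_eight : a ^ 8 = 1 := by
  have h := PresentedGroup.one_of_mem (rels := qdRels 4) (Or.inl rfl)
  rw [map_pow] at h
  -- `h` uses the group structure of `PresentedGroup`, equal to that of `QD16` only up to unfolding
  exact h

theorem x_mul_x : x * x = 1 := by
  have h := PresentedGroup.one_of_mem (rels := qdRels 4) (Or.inr (Or.inl rfl))
  rw [map_pow, sq] at h
  exact h

theorem x_mul_a : x * a = a ^ 3 * x := by
  have h : x * a * x = a ^ 3 := by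
    have h := PresentedGroup.mk_eq_mk_of_mul_inv_mem (rels := qdRels 4) (Or.inr (Or.inr rfl))
    rw [map_mul, map_mul, map_pow] at h
    exact h
  rw [← h, mul_assoc _ x, x_mul_x, mul_one]

theorem mem_closure_a_x (g : QD16) : g ∈ Subgroup.closure {a, x} :=
  PresentedGroup.generated_by (qdRels 4) (Subgroup.closure {a, x})
    (fun j => Subgroup.subset_closure (by fin_cases j; exacts [Or.inl rfl, Or.inr rfl])) g

def toPerm : QD16 →* Equiv.Perm (ZMod 8) :=
  PresentedGroup.toGroup (f := ![Equiv.addLeft 1, ⟨(3 * ·), (3 * ·), by decide, by decide⟩])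
    (by rintro r (rfl | rfl | rfl) <;> decide)

theorem toPerm_a : toPerm a = Equiv.addLeft 1 :=
  PresentedGroup.toGroup.of _

theorem a_pow_four_ne_one : a ^ 4 ≠ 1 := fun h => by
  have h' := congrArg toPerm h
  rw [map_pow, map_one, toPerm_a] at h'
  exact absurd h' (by decide)

theorem orderOf_a : orderOf a = 8 :=
  orderOf_eq_prime_pow (p := 2) (n := 2) a_pow_four_ne_one a_pow_eight

end QD16

noncomputable def MonoidAlgebra.augmentation (k G : Type*) [CommSemiring k] [Monoid G] :
    MonoidAlgebra k G →ₐ[k] k :=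
  MonoidAlgebra.lift k k G 1

@[simp]
theorem MonoidAlgebra.augmentation_single {k G : Type*} [CommSemiring k] [Monoid G] (g : G)
    (r : k) : augmentation k G (single g r) = r := by
  simp [augmentation]

theorem Ideal.jacobson_bot_eq_ker_of_isNilpotent {A K Fn : Type*} [Ring A] [DivisionRing K]
    [FunLike Fn A K] [RingHomClass Fn A K] (f : Fn) (hf : Function.Surjective f)
    (hnil : ∀ a ∈ RingHom.ker f, IsNilpotent a) : (⊥ : Ideal A).jacobson = RingHom.ker f := by
  refine le_antisymm (sInf_le ⟨bot_le, RingHom.ker_isMaximal_of_surjective f hf⟩) fun a ha => ?_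
  refine Ideal.mem_jacobson_iff.mpr fun b => ?_
  obtain ⟨u, hu⟩ := (hnil _ ((RingHom.ker f).mul_mem_left b ha)).isUnit_add_one
  refine ⟨↑u⁻¹, ?_⟩
  rw [Ideal.mem_bot, mul_assoc, ← mul_add_one, ← hu, Units.inv_mul, sub_self]

namespace QD16

open MonoidAlgebra

variable {k : Type*} [CommRing k]

theorem of_a_pow_eight : of k QD16 a ^ 8 = 1 := by
  rw [← map_pow, a_pow_eight, map_one]

theorem of_x_mul_of_x : of k QD16 x * of k QD16 x = 1 := by
  rw [← map_mul, x_mul_x, map_one]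

theorem of_x_mul_of_a : of k QD16 x * of k QD16 a = of k QD16 a ^ 3 * of k QD16 x := by
  rw [← map_mul, x_mul_a, map_mul, map_pow]

theorem exists_of_eq_aeval_add_aeval_mul (g : QD16) :
    ∃ p q : k[X], of k QD16 g = aeval (of k QD16 a) p + aeval (of k QD16 a) q * of k QD16 x := by
  have left_mul (r p q : k[X]) : aeval (of k QD16 a) r * (aeval (of k QD16 a) p +
      aeval (of k QD16 a) q * of k QD16 x) =
      aeval (of k QD16 a) (r * p) + aeval (of k QD16 a) (r * q) * of k QD16 x := by
    rw [map_mul, map_mul, mul_add, mul_assoc]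
  have ha_inv : a⁻¹ = a ^ 7 := inv_eq_of_mul_eq_one_right a_pow_eight
  have hx_inv : x⁻¹ = x := inv_eq_of_mul_eq_one_right x_mul_x
  induction mem_closure_a_x g using Subgroup.closure_induction_left with
  | one => exact ⟨1, 0, by rw [map_one, map_one, map_zero, zero_mul, add_zero]⟩
  | mul_left s hs h _ ih =>
    obtain ⟨p, q, hpq⟩ := ih
    rcases hs with rfl | rfl
    · exact ⟨X * p, X * q, by rw [map_mul, hpq, ← left_mul, aeval_X]⟩
    · exact ⟨_, _, by rw [map_mul, hpq, mul_aeval_add_aeval_mul of_x_mul_of_x of_x_mul_of_a]⟩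
  | inv_mul_cancel s hs h _ ih =>
    obtain ⟨p, q, hpq⟩ := ih
    rcases hs with rfl | rfl
    · exact ⟨X ^ 7 * p, X ^ 7 * q, by rw [map_mul, hpq, ← left_mul, ha_inv, map_pow, aeval_X_pow]⟩
    · exact ⟨_, _, by
        rw [map_mul, hpq, hx_inv, mul_aeval_add_aeval_mul of_x_mul_of_x of_x_mul_of_a]⟩

theorem exists_eq_aeval_add_aeval_mul (w : MonoidAlgebra k QD16) :
    ∃ p q : k[X], w = aeval (of k QD16 a) p + aeval (of k QD16 a) q * of k QD16 x := by
  induction w using MonoidAlgebra.induction_linear with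
  | zero => exact ⟨0, 0, by rw [map_zero, zero_mul, add_zero]⟩
  | add u v hu hv =>
    obtain ⟨p, q, rfl⟩ := hu
    obtain ⟨p', q', rfl⟩ := hv
    exact ⟨p + p', q + q', by rw [map_add, map_add, add_mul]; abel⟩
  | single g r =>
    obtain ⟨p, q, hpq⟩ := exists_of_eq_aeval_add_aeval_mul (k := k) g
    refine ⟨r • p, r • q, ?_⟩
    rw [map_smul, map_smul, smul_mul_assoc, ← smul_add, ← hpq, of_apply, smul_single', mul_one]

theorem pow_eight_eq_zero_of_augmentation_eq_zero [CharP k 2] {w : MonoidAlgebra k QD16}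
    (hw : augmentation k QD16 w = 0) : w ^ 8 = 0 := by
  obtain ⟨p, q, rfl⟩ := exists_eq_aeval_add_aeval_mul w
  refine aeval_add_aeval_mul_pow_eight_eq_zero of_a_pow_eight of_x_mul_of_x of_x_mul_of_a ?_
  simpa [← aeval_algHom_apply] using hw

end QD16

theorem oneAddJacobson_exponent_QD16_general (F : Type) [Field F] [CharP F 2]
    (V : Subgroup (MonoidAlgebra F QD16)ˣ)
    (hV : ∀ u : (MonoidAlgebra F QD16)ˣ,
      u ∈ V ↔ (u : MonoidAlgebra F QD16) - 1 ∈ (⊥ : Ideal (MonoidAlgebra F QD16)).jacobson) :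
    Monoid.exponent V = 8 := by
  let ε := MonoidAlgebra.augmentation F QD16
  have hJ : (⊥ : Ideal (MonoidAlgebra F QD16)).jacobson = RingHom.ker ε :=
    Ideal.jacobson_bot_eq_ker_of_isNilpotent ε (fun r => ⟨algebraMap F _ r, ε.commutes r⟩)
      fun w hw => ⟨8, QD16.pow_eight_eq_zero_of_augmentation_eq_zero hw⟩
  have hmem (u : (MonoidAlgebra F QD16)ˣ) : u ∈ V ↔ ε u = 1 := by
    rw [hV, hJ, RingHom.mem_ker, map_sub, map_one, sub_eq_zero]
  have := charP_of_injective_algebraMap (algebraMap F (MonoidAlgebra F QD16)).injective 2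
  refine Nat.dvd_antisymm (Monoid.exponent_dvd_of_forall_pow_eq_one fun v => ?_) ?_
  · have h := QD16.pow_eight_eq_zero_of_augmentation_eq_zero
      (w := ((v : (MonoidAlgebra F QD16)ˣ) : MonoidAlgebra F QD16) - 1)
      (by rw [map_sub, map_one, (hmem v).mp v.2, sub_self])
    rw [show 8 = 2 ^ 3 by rfl, sub_pow_char_pow_of_commute _ _ (Commute.one_right _), one_pow,
      sub_eq_zero] at h
    exact Subtype.ext (Units.ext (by simpa using h))
  · let u : V :=
      ⟨Units.map (MonoidAlgebra.of F QD16) (toUnits QD16.a), (hmem _).mpr (by simp [ε])⟩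
    have hu : orderOf u = 8 := by
      rw [← orderOf_submonoid, ← orderOf_units, ← QD16.orderOf_a]
      exact orderOf_injective _ MonoidAlgebra.of_injective QD16.a
    exact hu ▸ Monoid.order_dvd_exponent u

theorem oneAddJacobson_exponent_QD16 (F : Type) [Field F] [Fintype F] [CharP F 2]
    (n : ℕ) (hn : 0 < n) (hq : Fintype.card F = 2 ^ n)
    (V : Subgroup (MonoidAlgebra F QD16)ˣ)
    (hV : ∀ u : (MonoidAlgebra F QD16)ˣ,
      u ∈ V ↔ (u : MonoidAlgebra F QD16) - 1 ∈ (⊥ : Ideal (MonoidAlgebra F QD16)).jacobson) :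
    Monoid.exponent V = 8 :=
  oneAddJacobson_exponent_QD16_general F V hV
end

section
/- Let F_q be a finite field of odd characteristic p with q = p^n elements. If q ≡ 1 (mod 16) or q ≡ 7 (mod 16), then the unit group U(F_q[QD_32]) of the group algebra F_q[QD_32] is isomorphic to C_{q-1}^4 × GL(2,F_q)^7, the direct product of four copies of the cyclic group of order q - 1 and seven copies of the general linear group GL(2,F_q). -/
/-- The quasidihedral group of order 32: `⟨a, x | a^16 = x^2 = 1, x a x = a^7⟩`. -/
def QD32 : Type := PresentedGroup (qdRels 5)

instance : Group QD32 := inferInstanceAs (Group (PresentedGroup (qdRels 5)))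

/-!
Let `ζ` be a primitive 16th root of unity over `F`. Since `q ≡ 1` or `7 (mod 16)`, the Frobenius
`z ↦ z ^ q` permutes `ζ ^ j` and `ζ ^ (7 * j)`, so `s_j = ζ ^ j + ζ ^ (7 * j)` lies in `F`. Sending
`a` to the companion matrix of `(X - ζ ^ j) (X - ζ ^ (7 * j))` and `x` to a suitable involution
gives seven two-dimensional representations over `F`; with the four characters `a, x ↦ ±1` they
define an algebra map `F[QD₃₂] → F⁴ × M₂(F)⁷`. The regular trace of the target, pulled back to
the group, is `32` at `1` and `0` elsewhere; as `q` is odd, this forces the map to be injective,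
and both sides have dimension `32`. Taking units gives the theorem.
-/

lemma IsPrimitiveRoot.pow_pow_eq_one {M : Type*} [CommMonoid M] {ζ : M} {k : ℕ}
    (h : IsPrimitiveRoot ζ k) (j : ℕ) : (ζ ^ j) ^ k = 1 := by
  rw [pow_right_comm, h.pow_eq_one, one_pow]

namespace MonoidAlgebra

variable {k G A : Type*} [Group G]

lemma trace_lift_eq [CommRing k] [Semiring A] [Algebra k A] (ρ : G →* A) (τ : A →ₗ[k] k)
    (hτ : ∀ g ≠ 1, τ (ρ g) = 0) (c : MonoidAlgebra k G) :
    τ (lift k A G ρ c) = c.coeff 1 * τ 1 := by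
  induction c using MonoidAlgebra.induction_on with
  | of g =>
    rcases eq_or_ne g 1 with rfl | hg
    · simp
    · simp [hτ g hg, hg]
  | add c d hc hd => simp [hc, hd, add_mul]
  | smul r c hc => simp [hc, mul_assoc]

lemma lift_injective_of_trace [CommRing k] [NoZeroDivisors k] [Semiring A] [Algebra k A]
    (ρ : G →* A) (τ : A →ₗ[k] k) (hτ : ∀ g ≠ 1, τ (ρ g) = 0) (hτ1 : τ 1 ≠ 0) :
    Function.Injective (lift k A G ρ) := by
  refine (injective_iff_map_eq_zero _).mpr fun c hc => ?_
  ext g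
  have := trace_lift_eq ρ τ hτ (single g⁻¹ 1 * c)
  rw [map_mul, hc, mul_zero, map_zero, coeff_single_mul_apply] at this
  simpa [hτ1] using this.symm

lemma lift_bijective_of_trace [Field k] [Finite G] [Ring A] [Algebra k A] (ρ : G →* A)
    (τ : A →ₗ[k] k) (hτ : ∀ g ≠ 1, τ (ρ g) = 0) (hτ1 : τ 1 ≠ 0)
    (hdim : Module.finrank k A = Nat.card G) : Function.Bijective (lift k A G ρ) := by
  have hinj := lift_injective_of_trace ρ τ hτ hτ1
  have : FiniteDimensional k A := Module.finite_of_finrank_pos (by rw [hdim]; exact Nat.card_pos)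
  have hdim' : Module.finrank k (MonoidAlgebra k G) = Module.finrank k A := by
    rw [hdim, Module.finrank_eq_nat_card_basis (basis G k)]
  exact ⟨hinj, (LinearMap.injective_iff_surjective_of_finrank_eq_finrank hdim'
    (f := (lift k A G ρ).toLinearMap)).mp hinj⟩

end MonoidAlgebra

namespace FiniteField

variable {F K : Type*} [Field F] [Fintype F] [Field K]

open Polynomial in
lemma mem_range_of_pow_card_eq (ι : F →+* K) {z : K} (hz : z ^ Fintype.card F = z) :
    z ∈ ι.range := by
  have hq := Fintype.one_lt_card (α := F)
  have hsplit : (X ^ Fintype.card F - X : F[X]).Splits := by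
    rw [splits_iff_card_roots, roots_X_pow_card_sub_X, X_pow_card_sub_X_natDegree_eq F hq]
    rfl
  exact hsplit.mem_range_of_isRoot (X_pow_card_sub_X_ne_zero F hq) (by simp [hz])

lemma add_pow_seven_mem_range [Algebra F K]
    (hq : Fintype.card F % 16 = 1 ∨ Fintype.card F % 16 = 7) {μ : K} (hμ : μ ^ 16 = 1) :
    μ + μ ^ 7 ∈ (algebraMap F K).range := by
  apply mem_range_of_pow_card_eq
  have hμ7 : (μ ^ 7) ^ 16 = 1 := by rw [pow_right_comm, hμ, one_pow]
  have hfrob : ∀ y : K, y ^ Fintype.card F = frobeniusAlgHom F K y := fun _ => rfl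
  rw [hfrob, map_add, ← hfrob, ← hfrob, pow_eq_pow_mod _ hμ, pow_eq_pow_mod _ hμ7]
  rcases hq with hq | hq <;> rw [hq]
  · simp
  · rw [← pow_mul, show 7 * 7 = 16 * 3 + 1 by norm_num, pow_add, pow_mul, hμ, one_pow, one_mul,
      pow_one, add_comm]

noncomputable def unitsMulEquivZMod (F : Type*) [Field F] [Fintype F] :
    Fˣ ≃* Multiplicative (ZMod (Fintype.card F - 1)) :=
  (zmodCyclicMulEquiv inferInstance).symm.trans
    (ZMod.ringEquivCongr (by rw [Nat.card_units, Nat.card_eq_fintype_card])).toAddEquiv.toMultiplicative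

end FiniteField

def MulEquiv.prodUnitsCongr {M N P Q : Type*} [Monoid M] [Monoid N] [Monoid P] [Monoid Q]
    (e : Mˣ ≃* P) (f : Nˣ ≃* Q) : (M × N)ˣ ≃* P × Q :=
  MulEquiv.prodUnits.trans (e.prodCongr f)

namespace QD32

def a : QD32 := PresentedGroup.of (rels := qdRels 5) 0

def x : QD32 := PresentedGroup.of (rels := qdRels 5) 1

lemma a_pow_sixteen : a ^ 16 = 1 := by
  have := PresentedGroup.one_of_mem (rels := qdRels 5) (x := FreeGroup.of 0 ^ 16) (by simp [qdRels])
  rwa [map_pow] at this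

lemma x_sq : x ^ 2 = 1 := by
  have := PresentedGroup.one_of_mem (rels := qdRels 5) (x := FreeGroup.of 1 ^ 2) (by simp [qdRels])
  rwa [map_pow] at this

lemma x_mul_a_mul_x : x * a * x = a ^ 7 := by
  have := PresentedGroup.one_of_mem (rels := qdRels 5)
    (x := FreeGroup.of 1 * FreeGroup.of 0 * FreeGroup.of 1 * (FreeGroup.of 0 ^ 7)⁻¹)
    (by simp [qdRels])
  rwa [map_mul, map_inv, map_pow, mul_inv_eq_one] at this

lemma a_inv : a⁻¹ = a ^ 15 := inv_eq_of_mul_eq_one_right (by rw [← pow_succ', a_pow_sixteen])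

lemma x_inv : x⁻¹ = x := inv_eq_of_mul_eq_one_right (by rw [← sq, x_sq])

lemma x_mul_a_pow (m : ℕ) : x * a ^ m = a ^ (7 * m) * x := by
  have : x * a * x⁻¹ = a ^ 7 := by rw [x_inv, x_mul_a_mul_x]
  rw [← mul_inv_eq_iff_eq_mul, ← conj_pow, this, pow_mul]

lemma closure_a_x : Subgroup.closure {a, x} = ⊤ := by
  have hrange : ({a, x} : Set QD32) = Set.range (PresentedGroup.of (rels := qdRels 5)) := by
    ext g
    constructor
    · rintro (rfl | rfl)
      exacts [⟨0, rfl⟩, ⟨1, rfl⟩]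
    · rintro ⟨i, rfl⟩
      fin_cases i
      exacts [Or.inl rfl, Or.inr rfl]
  rw [hrange]
  exact PresentedGroup.closure_range_of _

lemma exists_eq_a_pow_mul_x_pow (g : QD32) : ∃ m e : ℕ, g = a ^ m * x ^ e := by
  have hg : g ∈ Subgroup.closure {a, x} := by rw [closure_a_x]; trivial
  induction hg using Subgroup.closure_induction_left with
  | one => exact ⟨0, 0, by simp⟩
  | mul_left g hg h _ ih =>
    obtain ⟨m, e, rfl⟩ := ih
    rcases hg with rfl | rfl
    · exact ⟨m + 1, e, by rw [pow_succ', mul_assoc]⟩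
    · exact ⟨7 * m, e + 1, by rw [← mul_assoc, x_mul_a_pow, mul_assoc, pow_succ']⟩
  | inv_mul_cancel g hg h _ ih =>
    obtain ⟨m, e, rfl⟩ := ih
    rcases hg with rfl | rfl
    · exact ⟨15 + m, e, by rw [a_inv, pow_add, mul_assoc]⟩
    · exact ⟨7 * m, e + 1, by rw [x_inv, ← mul_assoc, x_mul_a_pow, mul_assoc, pow_succ']⟩

structure SatisfiesRelations {M : Type*} [Monoid M] (α ξ : M) : Prop where
  pow_sixteen : α ^ 16 = 1
  sq : ξ ^ 2 = 1
  conj : ξ * α * ξ = α ^ 7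

namespace SatisfiesRelations

variable {M N : Type*} [Monoid M] [Monoid N] {α ξ : M}

lemma of_map (f : M →* N) (hf : Function.Injective f) (h : SatisfiesRelations (f α) (f ξ)) :
    SatisfiesRelations α ξ where
  pow_sixteen := hf (by rw [map_pow, h.pow_sixteen, map_one])
  sq := hf (by rw [map_pow, h.sq, map_one])
  conj := hf (by rw [map_mul, map_mul, map_pow, h.conj])

lemma prod {α' ξ' : N} (h : SatisfiesRelations α ξ) (h' : SatisfiesRelations α' ξ') :
    SatisfiesRelations (α, α') (ξ, ξ') where
  pow_sixteen := by simp [h.pow_sixteen, h'.pow_sixteen]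
  sq := by simp [h.sq, h'.sq]
  conj := by simp [h.conj, h'.conj]

lemma of_sq_eq_one {C : Type*} [CommMonoid C] {α ξ : C} (hα : α ^ 2 = 1) (hξ : ξ ^ 2 = 1) :
    SatisfiesRelations α ξ where
  pow_sixteen := by rw [show 16 = 2 * 8 by rfl, pow_mul, hα, one_pow]
  sq := hξ
  conj := by
    rw [mul_comm ξ α, mul_assoc, ← pow_two, hξ, mul_one, show 7 = 2 * 3 + 1 by rfl, pow_add,
      pow_mul, hα, one_pow, one_mul, pow_one]

def toUnits (h : SatisfiesRelations α ξ) : QD32 →* Mˣ :=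
  PresentedGroup.toGroup
    (f := ![Units.ofPowEqOne α 16 h.pow_sixteen (by norm_num),
      Units.ofPowEqOne ξ 2 h.sq (by norm_num)])
    (by
      intro r hr
      simp only [qdRels, Set.mem_insert_iff, Set.mem_singleton_iff] at hr
      rcases hr with rfl | rfl | rfl
      · ext; simp
      · ext; simp
      · rw [map_mul, map_inv, map_pow, mul_inv_eq_one]; ext; simp [h.conj])

lemma toUnits_a (h : SatisfiesRelations α ξ) :
    h.toUnits a = Units.ofPowEqOne α 16 h.pow_sixteen (by norm_num) :=
  PresentedGroup.toGroup.of _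

lemma toUnits_x (h : SatisfiesRelations α ξ) :
    h.toUnits x = Units.ofPowEqOne ξ 2 h.sq (by norm_num) :=
  PresentedGroup.toGroup.of _

def lift (h : SatisfiesRelations α ξ) : QD32 →* M := (Units.coeHom M).comp h.toUnits

@[simp]
lemma lift_a (h : SatisfiesRelations α ξ) : h.lift a = α := by
  simp [lift, toUnits_a]

@[simp]
lemma lift_x (h : SatisfiesRelations α ξ) : h.lift x = ξ := by
  simp [lift, toUnits_x]

end SatisfiesRelations

def affineRep : QD32 →* Equiv.Perm (ZMod 16) :=
  SatisfiesRelations.lift (α := Equiv.addRight 1) (ξ := (ZMod.unitOfCoprime 7 (by norm_num)).mulLeft)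
    ⟨by decide, by decide, by decide⟩

def normalForm (me : Fin 16 × Fin 2) : QD32 := a ^ (me.1 : ℕ) * x ^ (me.2 : ℕ)

lemma normalForm_bijective : Function.Bijective normalForm := by
  refine ⟨fun me me' h => ?_, fun g => ?_⟩
  · have key : Function.Injective (affineRep ∘ normalForm) := by
      have : affineRep ∘ normalForm = fun me => Equiv.addRight (1 : ZMod 16) ^ (me.1 : ℕ) *
          (ZMod.unitOfCoprime 7 (by norm_num)).mulLeft ^ (me.2 : ℕ) := by
        funext me; simp [normalForm, affineRep]
      rw [this]
      decide
    exact key (congrArg affineRep h)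
  · obtain ⟨m, e, rfl⟩ := exists_eq_a_pow_mul_x_pow g
    exact ⟨(⟨m % 16, Nat.mod_lt _ (by norm_num)⟩, ⟨e % 2, Nat.mod_lt _ (by norm_num)⟩),
      by rw [normalForm, pow_eq_pow_mod m a_pow_sixteen, pow_eq_pow_mod e x_sq]⟩

instance : Finite QD32 := .of_equiv _ (Equiv.ofBijective _ normalForm_bijective)

lemma nat_card : Nat.card QD32 = 32 := by
  rw [← Nat.card_congr (Equiv.ofBijective _ normalForm_bijective)]
  simp

open Matrix

section matrices

variable {R : Type*} [CommRing R]

def matA (s t : R) : Matrix (Fin 2) (Fin 2) R := !![0, -t; 1, s]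

def matX (s : R) : Matrix (Fin 2) (Fin 2) R := !![1, s; 0, -1]

lemma matX_sq (s : R) : matX s ^ 2 = 1 := by
  rw [sq, matX, mul_fin_two, one_fin_two]
  simp

lemma matX_mul_matA_mul_matX (s t : R) : matX s * matA s t * matX s = s • 1 - matA s t := by
  rw [matX, matA, mul_fin_two, mul_fin_two, one_fin_two]
  ext i j; fin_cases i <;> fin_cases j <;> simp

lemma matA_sq (s t : R) : matA s t ^ 2 = s • matA s t - t • 1 := by
  rw [sq, matA, mul_fin_two, one_fin_two]
  ext i j; fin_cases i <;> fin_cases j <;> simp [mul_comm, neg_add_eq_sub]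

lemma exists_matA_pow_eq (s t : R) (k : ℕ) :
    ∃ c d : R, matA s t ^ k = c • 1 + d • matA s t := by
  induction k with
  | zero => exact ⟨1, 0, by simp⟩
  | succ k ih =>
    obtain ⟨c, d, h⟩ := ih
    refine ⟨-(d * t), c + d * s, ?_⟩
    rw [pow_succ, h, add_mul, smul_mul_assoc, smul_mul_assoc, one_mul, ← sq, matA_sq]
    module

lemma trace_matA_pow_mul_matX (s t : R) (k : ℕ) : trace (matA s t ^ k * matX s) = 0 := by
  obtain ⟨c, d, h⟩ := exists_matA_pow_eq s t k
  rw [h, matA, matX, one_fin_two, trace_fin_two]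
  simp

lemma map_matA {S : Type*} [CommRing S] (f : R →+* S) (s t : R) :
    f.mapMatrix (matA s t) = matA (f s) (f t) := by
  ext i j; fin_cases i <;> fin_cases j <;> simp [matA]

lemma map_matX {S : Type*} [CommRing S] (f : R →+* S) (s : R) :
    f.mapMatrix (matX s) = matX (f s) := by
  ext i j; fin_cases i <;> fin_cases j <;> simp [matX]

end matrices

section eigenvalues

variable {K : Type*} [Field K] {μ ν : K}

/-- The columns are eigenvectors of `matA (μ + ν) (μ * ν)` for the eigenvalues `μ` and `ν`. -/
def eigenbasis (μ ν : K) : Matrix (Fin 2) (Fin 2) K := !![-ν, -μ; 1, 1]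

lemma isUnit_eigenbasis (h : μ ≠ ν) : IsUnit (eigenbasis μ ν) := by
  rw [isUnit_iff_isUnit_det, eigenbasis, det_fin_two_of, isUnit_iff_ne_zero]
  intro h0
  exact h (by linear_combination h0)

lemma matA_pow_mul_eigenbasis (μ ν : K) (k : ℕ) :
    matA (μ + ν) (μ * ν) ^ k * eigenbasis μ ν = eigenbasis μ ν * diagonal ![μ ^ k, ν ^ k] := by
  have h : SemiconjBy (eigenbasis μ ν) (diagonal ![μ, ν]) (matA (μ + ν) (μ * ν)) := by
    rw [SemiconjBy, eigenbasis, matA]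
    ext i j; fin_cases i <;> fin_cases j <;> simp [mul_comm]
  rw [← (h.pow_right k).eq, diagonal_pow]
  congr 2
  ext i; fin_cases i <;> rfl

lemma trace_matA_pow (h : μ ≠ ν) (k : ℕ) :
    trace (matA (μ + ν) (μ * ν) ^ k) = μ ^ k + ν ^ k := by
  have hP := isUnit_eigenbasis h
  rw [← mul_nonsing_inv_cancel_right _ (matA _ _ ^ k) ((isUnit_iff_isUnit_det _).mp hP),
    matA_pow_mul_eigenbasis, trace_conj hP, trace_fin_two]
  simp

lemma matA_pow_eq_one (h : μ ≠ ν) {k : ℕ} (hμ : μ ^ k = 1) (hν : ν ^ k = 1) :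
    matA (μ + ν) (μ * ν) ^ k = 1 := by
  refine (isUnit_eigenbasis h).mul_left_inj.mp ?_
  rw [matA_pow_mul_eigenbasis, hμ, hν, one_mul]
  ext i j; fin_cases i <;> fin_cases j <;> simp

lemma matA_pow_eq_smul_one_sub (h : μ ≠ ν) {k : ℕ} (hμ : μ ^ k = ν) (hν : ν ^ k = μ) :
    matA (μ + ν) (μ * ν) ^ k = (μ + ν) • 1 - matA (μ + ν) (μ * ν) := by
  have hD : diagonal ![ν, μ] = (μ + ν) • 1 - diagonal ![μ, ν] := by
    ext i j; fin_cases i <;> fin_cases j <;> simp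
  refine (isUnit_eigenbasis h).mul_left_inj.mp ?_
  rw [matA_pow_mul_eigenbasis, hμ, hν, hD, sub_mul, smul_mul_assoc, one_mul,
    ← pow_one (matA _ _), matA_pow_mul_eigenbasis, mul_sub, mul_smul_comm, mul_one, pow_one,
    pow_one]

lemma satisfiesRelations_matA_matX (h16 : μ ^ 16 = 1) (h7 : μ ^ 7 ≠ μ) :
    SatisfiesRelations (matA (μ + μ ^ 7) (μ ^ 8)) (matX (μ + μ ^ 7)) := by
  have h49 : (μ ^ 7) ^ 7 = μ := by
    rw [← pow_mul, show 7 * 7 = 16 * 3 + 1 by norm_num, pow_add, pow_mul, h16, one_pow, one_mul,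
      pow_one]
  have h16' : (μ ^ 7) ^ 16 = 1 := by rw [pow_right_comm, h16, one_pow]
  rw [show μ ^ 8 = μ * μ ^ 7 by ring]
  refine ⟨matA_pow_eq_one h7.symm h16 h16', matX_sq _, ?_⟩
  rw [matX_mul_matA_mul_matX, matA_pow_eq_smul_one_sub h7.symm rfl h49]

end eigenvalues

section descent

variable {F K : Type*} [Field F] [Field K] (ι : F →+* K) {μ : K} (h7 : μ ^ 7 ≠ μ) {s t : F}
  (hs : ι s = μ + μ ^ 7) (ht : ι t = μ ^ 8)
include h7 hs ht

lemma satisfiesRelations_matA_matX_of_map (h16 : μ ^ 16 = 1) :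
    SatisfiesRelations (matA s t) (matX s) := by
  refine .of_map ι.mapMatrix.toMonoidHom (map_injective ι.injective) ?_
  show SatisfiesRelations (ι.mapMatrix (matA s t)) (ι.mapMatrix (matX s))
  rw [map_matA, map_matX, hs, ht]
  exact satisfiesRelations_matA_matX h16 h7

lemma map_trace_matA_pow (k : ℕ) : ι (trace (matA s t ^ k)) = μ ^ k + (μ ^ 7) ^ k := by
  rw [AddMonoidHom.map_trace, ← RingHom.mapMatrix_apply, map_pow, map_matA, hs, ht,
    show μ ^ 8 = μ * μ ^ 7 by ring, trace_matA_pow h7.symm]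

end descent

abbrev BlockAlgebra (F : Type*) [Field F] : Type _ :=
  F × F × F × F × Matrix (Fin 2) (Fin 2) F × Matrix (Fin 2) (Fin 2) F × Matrix (Fin 2) (Fin 2) F ×
    Matrix (Fin 2) (Fin 2) F × Matrix (Fin 2) (Fin 2) F × Matrix (Fin 2) (Fin 2) F ×
    Matrix (Fin 2) (Fin 2) F

section blockAlgebra

variable {F : Type*} [Field F]

/-- The trace of the left regular representation of `BlockAlgebra F`. -/
def regularTrace : BlockAlgebra F →ₗ[F] F :=
  let t : Matrix (Fin 2) (Fin 2) F →ₗ[F] F := 2 • traceLinearMap (Fin 2) F F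
  LinearMap.id.coprod <| LinearMap.id.coprod <| LinearMap.id.coprod <| LinearMap.id.coprod <|
    t.coprod <| t.coprod <| t.coprod <| t.coprod <| t.coprod <| t.coprod t

lemma regularTrace_apply (c₁ c₂ c₃ c₄ : F) (M₁ M₂ M₃ M₄ M₅ M₆ M₇ : Matrix (Fin 2) (Fin 2) F) :
    regularTrace (c₁, c₂, c₃, c₄, M₁, M₂, M₃, M₄, M₅, M₆, M₇) = c₁ + c₂ + c₃ + c₄ +
      2 * (trace M₁ + trace M₂ + trace M₃ + trace M₄ + trace M₅ + trace M₆ + trace M₇) := by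
  simp only [regularTrace, LinearMap.coprod_apply, LinearMap.id_coe, id_eq, LinearMap.smul_apply,
    traceLinearMap_apply, nsmul_eq_mul, Nat.cast_ofNat]
  ring

lemma regularTrace_one : regularTrace (1 : BlockAlgebra F) = 32 := by
  rw [show (1 : BlockAlgebra F) = (1, 1, 1, 1, 1, 1, 1, 1, 1, 1, 1) from rfl, regularTrace_apply]
  norm_num

lemma finrank_blockAlgebra : Module.finrank F (BlockAlgebra F) = 32 := by
  simp [Module.finrank_prod, Module.finrank_matrix]

end blockAlgebra

section generators

variable {F K : Type*} [Field F] [Field K] (s : ℕ → F)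

def blockA (j : ℕ) : Matrix (Fin 2) (Fin 2) F := matA (s j) ((-1) ^ j)

/-- `1, 2, 3, 4, 6, 9, 11` represent the orbits `{j, 7 * j}` of multiplication by `7` on
`ZMod 16 \ {0, 8}`. -/
def genA : BlockAlgebra F :=
  (1, 1, -1, -1, blockA s 1, blockA s 2, blockA s 3, blockA s 4, blockA s 6, blockA s 9, blockA s 11)

def genX : BlockAlgebra F :=
  (1, -1, 1, -1, matX (s 1), matX (s 2), matX (s 3), matX (s 4), matX (s 6), matX (s 9),
    matX (s 11))

lemma regularTrace_genA_pow_mul_genX (m : ℕ) : regularTrace (genA s ^ m * genX s) = 0 := by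
  simp only [genA, genX, Prod.pow_mk, Prod.mk_mul_mk, regularTrace_apply, blockA,
    trace_matA_pow_mul_matX]
  ring

variable (ι : F →+* K) {ζ : K} (hζ : IsPrimitiveRoot ζ 16)
include hζ

lemma pow_seven_ne_self {j : ℕ} (hj : ¬ 8 ∣ j) : (ζ ^ j) ^ 7 ≠ ζ ^ j := by
  intro h
  rw [pow_succ, mul_eq_right₀ (pow_ne_zero _ (hζ.ne_zero (by norm_num))), ← pow_mul,
    hζ.pow_eq_one_iff_dvd] at h
  omega

lemma map_neg_one_pow (j : ℕ) : ι ((-1) ^ j) = (ζ ^ j) ^ 8 := by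
  rw [map_pow, map_neg, map_one, pow_right_comm,
    (hζ.pow (by norm_num) (by norm_num : 16 = 8 * 2)).eq_neg_one_of_two_right]

variable (hs : ∀ j, ι (s j) = ζ ^ j + (ζ ^ j) ^ 7)
include hs

lemma satisfiesRelations_blockA {j : ℕ} (hj : ¬ 8 ∣ j) :
    SatisfiesRelations (blockA s j) (matX (s j)) :=
  satisfiesRelations_matA_matX_of_map ι (pow_seven_ne_self hζ hj) (hs j) (map_neg_one_pow ι hζ j)
    (hζ.pow_pow_eq_one j)

lemma map_trace_blockA_pow {j : ℕ} (hj : ¬ 8 ∣ j) (m : ℕ) :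
    ι (trace (blockA s j ^ m)) = (ζ ^ m) ^ j + (ζ ^ m) ^ (7 * j) := by
  rw [blockA, map_trace_matA_pow ι (pow_seven_ne_self hζ hj) (hs j) (map_neg_one_pow ι hζ j)]
  ring

lemma satisfiesRelations_gen : SatisfiesRelations (genA s) (genX s) := by
  have hχ : ∀ α ξ : F, α ^ 2 = 1 → ξ ^ 2 = 1 → SatisfiesRelations α ξ := fun _ _ =>
    SatisfiesRelations.of_sq_eq_one
  have hB : ∀ j, ¬ 8 ∣ j → SatisfiesRelations (blockA s j) (matX (s j)) := fun _ =>
    satisfiesRelations_blockA s ι hζ hs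
  exact (hχ _ _ (by norm_num) (by norm_num)).prod <| (hχ _ _ (by norm_num) (by norm_num)).prod <|
    (hχ _ _ (by norm_num) (by norm_num)).prod <| (hχ _ _ (by norm_num) (by norm_num)).prod <|
    (hB 1 (by norm_num)).prod <| (hB 2 (by norm_num)).prod <| (hB 3 (by norm_num)).prod <|
    (hB 4 (by norm_num)).prod <| (hB 6 (by norm_num)).prod <| (hB 9 (by norm_num)).prod <|
    hB 11 (by norm_num)

lemma regularTrace_genA_pow {m : ℕ} (hm : ¬ 16 ∣ m) : regularTrace (genA s ^ m) = 0 := by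
  apply ι.injective
  simp (disch := decide) only [genA, Prod.pow_mk, regularTrace_apply, map_add, map_mul,
    map_ofNat, map_zero, one_pow, map_one, map_neg_one_pow ι hζ m, map_trace_blockA_pow s ι hζ hs]
  have hw : (ζ ^ m) ^ 16 = 1 := hζ.pow_pow_eq_one m
  have hgeom : ∑ k ∈ Finset.range 16, (ζ ^ m) ^ k = 0 := by
    rw [geom_sum_eq ((hζ.pow_eq_one_iff_dvd m).not.mpr hm), hw, sub_self, zero_div]
  rw [pow_eq_pow_mod (7 * 3) hw, pow_eq_pow_mod (7 * 4) hw, pow_eq_pow_mod (7 * 6) hw,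
    pow_eq_pow_mod (7 * 9) hw, pow_eq_pow_mod (7 * 11) hw]
  simp only [Finset.sum_range_succ, Finset.sum_range_zero] at hgeom
  norm_num only
  linear_combination 2 * hgeom

lemma regularTrace_lift_gen_eq_zero {g : QD32} (hg : g ≠ 1) :
    regularTrace ((satisfiesRelations_gen s ι hζ hs).lift g) = 0 := by
  obtain ⟨⟨m, e⟩, rfl⟩ := normalForm_bijective.2 g
  fin_cases e
  · have hm : ¬ 16 ∣ (m : ℕ) := by
      intro hm
      apply hg
      simp [normalForm, Nat.eq_zero_of_dvd_of_lt hm m.isLt]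
    simpa [normalForm] using regularTrace_genA_pow s ι hζ hs hm
  · simpa [normalForm] using regularTrace_genA_pow_mul_genX s m

theorem nonempty_algEquiv_blockAlgebra :
    Nonempty (MonoidAlgebra F QD32 ≃ₐ[F] BlockAlgebra F) := by
  have h2 : (2 : F) ≠ 0 := by
    have : NeZero ((16 : ℕ) : K) := hζ.neZero'
    intro h
    apply NeZero.ne ((16 : ℕ) : K)
    rw [show ((16 : ℕ) : K) = ι 2 ^ 4 by rw [map_ofNat]; norm_num, h, map_zero,
      zero_pow (by norm_num)]
  have hτ1 : regularTrace (1 : BlockAlgebra F) ≠ 0 := by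
    rw [regularTrace_one, show (32 : F) = 2 ^ 5 by norm_num]
    exact pow_ne_zero _ h2
  exact ⟨.ofBijective _ (MonoidAlgebra.lift_bijective_of_trace _ regularTrace
    (fun _ => regularTrace_lift_gen_eq_zero s ι hζ hs) hτ1
    (by rw [finrank_blockAlgebra, nat_card]))⟩

end generators

noncomputable def unitsBlockAlgebraEquiv (F : Type*) [Field F] [Fintype F] :
    (BlockAlgebra F)ˣ ≃* (Multiplicative (ZMod (Fintype.card F - 1)) ×
      Multiplicative (ZMod (Fintype.card F - 1)) × Multiplicative (ZMod (Fintype.card F - 1)) ×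
      Multiplicative (ZMod (Fintype.card F - 1)) × GL (Fin 2) F × GL (Fin 2) F × GL (Fin 2) F ×
      GL (Fin 2) F × GL (Fin 2) F × GL (Fin 2) F × GL (Fin 2) F) :=
  let c := FiniteField.unitsMulEquivZMod F
  let g : GL (Fin 2) F ≃* GL (Fin 2) F := .refl _
  c.prodUnitsCongr <| c.prodUnitsCongr <| c.prodUnitsCongr <| c.prodUnitsCongr <|
    g.prodUnitsCongr <| g.prodUnitsCongr <| g.prodUnitsCongr <| g.prodUnitsCongr <|
    g.prodUnitsCongr <| g.prodUnitsCongr g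

end QD32

theorem unitGroup_QD32_one_seven_general (F : Type) [Field F] [Fintype F]
    (h16 : Fintype.card F % 16 = 1 ∨ Fintype.card F % 16 = 7) :
    Nonempty ((MonoidAlgebra F QD32)ˣ ≃*
      (Multiplicative (ZMod (Fintype.card F - 1)) ×
       Multiplicative (ZMod (Fintype.card F - 1)) ×
       Multiplicative (ZMod (Fintype.card F - 1)) ×
       Multiplicative (ZMod (Fintype.card F - 1)) ×
       Matrix.GeneralLinearGroup (Fin 2) F ×
       Matrix.GeneralLinearGroup (Fin 2) F ×
       Matrix.GeneralLinearGroup (Fin 2) F ×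
       Matrix.GeneralLinearGroup (Fin 2) F ×
       Matrix.GeneralLinearGroup (Fin 2) F ×
       Matrix.GeneralLinearGroup (Fin 2) F ×
       Matrix.GeneralLinearGroup (Fin 2) F)) := by
  have h2 : (2 : F) ≠ 0 := Ring.two_ne_zero (mt FiniteField.even_card_iff_char_two.mp (by omega))
  have : NeZero ((16 : ℕ) : F) := ⟨by
    rw [show ((16 : ℕ) : F) = 2 ^ 4 by norm_num]; exact pow_ne_zero _ h2⟩
  obtain ⟨ζ, hζ⟩ := HasEnoughRootsOfUnity.exists_primitiveRoot (AlgebraicClosure F) 16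
  choose s hs using fun j => FiniteField.add_pow_seven_mem_range h16 (hζ.pow_pow_eq_one j)
  obtain ⟨e⟩ := QD32.nonempty_algEquiv_blockAlgebra s _ hζ hs
  exact ⟨(Units.mapEquiv e.toMulEquiv).trans (QD32.unitsBlockAlgebraEquiv F)⟩

theorem unitGroup_QD32_one_seven (F : Type) [Field F] [Fintype F]
    (p n : ℕ) [Fact p.Prime] (hp : Odd p) [CharP F p]
    (hn : 0 < n) (hq : Fintype.card F = p ^ n)
    (h16 : Fintype.card F % 16 = 1 ∨ Fintype.card F % 16 = 7) :
    Nonempty ((MonoidAlgebra F QD32)ˣ ≃*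
      (Multiplicative (ZMod (Fintype.card F - 1)) ×
       Multiplicative (ZMod (Fintype.card F - 1)) ×
       Multiplicative (ZMod (Fintype.card F - 1)) ×
       Multiplicative (ZMod (Fintype.card F - 1)) ×
       Matrix.GeneralLinearGroup (Fin 2) F ×
       Matrix.GeneralLinearGroup (Fin 2) F ×
       Matrix.GeneralLinearGroup (Fin 2) F ×
       Matrix.GeneralLinearGroup (Fin 2) F ×
       Matrix.GeneralLinearGroup (Fin 2) F ×
       Matrix.GeneralLinearGroup (Fin 2) F ×
       Matrix.GeneralLinearGroup (Fin 2) F)) :=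
  unitGroup_QD32_one_seven_general F h16
end
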